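/- The path constructed by: (1) 2m+1 N steps, then 2m E steps, then one N step, then two S steps; (2) appending m walks of length 2m, each a left-walk if the current position (2m+x, 2m-x) has x > 0 and a right-walk otherwise; (3) S steps down to the x-axis followed by W steps to the origin, is a 2sip-walk of length 2m² + 8m + 4. -/

import Mathlib

open Filter

/-- A step of a lattice walk: North, East, South or West. -/
inductive Step : Type
  | N | E | S | W
  deriving DecidableEq

/-- The vector of a step. -/
def Step.vec : Step → ℤ × ℤ
  | .N => (0, 1)
  | .E => (1, 0)
  | .S => (0, -1)
  | .W => (-1, 0)

/-- The endpoint of a walk starting at the origin. -/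
def endpt (w : List Step) : ℤ × ℤ := (w.map Step.vec).sum

/-- All points visited by a walk starting at the origin (including start and end). -/
def positions (w : List Step) : List (ℤ × ℤ) :=
  w.scanl (fun p s => p + s.vec) ((0, 0) : ℤ × ℤ)

/-- A walk is eager if it contains no ES and no NW corner. -/
def Eager (w : List Step) : Prop :=
  ¬ [Step.E, Step.S] <:+: w ∧ ¬ [Step.N, Step.W] <:+: w

/-- A quarter-plane loop: a nonempty walk returning to its starting point and
staying (weakly) north-east of it. -/
def IsQPLoop (l : List Step) : Prop :=
  l ≠ [] ∧ endpt l = (0, 0) ∧ ∀ p ∈ positions l, 0 ≤ p.1 ∧ 0 ≤ p.2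

/-- A walk is standard if every QP-subloop begins with an N step. -/
def Standard (w : List Step) : Prop :=
  ∀ a l b : List Step, w = a ++ l ++ b → IsQPLoop l → l.head? = some Step.N

/-- The walk stays in the half-plane x + y ≥ 0. -/
def InHalfPlane (w : List Step) : Prop :=
  ∀ p ∈ positions w, 0 ≤ p.1 + p.2

/-- A big-walk: confined to the half-plane x+y ≥ 0, from (0,0) to the line x+y=0,
standard and eager. -/
def IsBigWalk (w : List Step) : Prop :=
  InHalfPlane w ∧ (endpt w).1 + (endpt w).2 = 0 ∧ Standard w ∧ Eager w

/-- A left-walk: a big-walk ending at (x,-x) with x ≤ 0. -/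
def IsLeftWalk (w : List Step) : Prop := IsBigWalk w ∧ (endpt w).1 ≤ 0

/-- A right-walk: a big-walk ending at (x,-x) with x ≥ 0. -/
def IsRightWalk (w : List Step) : Prop := IsBigWalk w ∧ 0 ≤ (endpt w).1

/-- Vertical-happy: every step taken from a point of the lines x+y=0 or x+y=1
is N or S. -/
def VerticalHappy (w : List Step) : Prop :=
  ∀ a s b, w = a ++ s :: b →
    ((endpt a).1 + (endpt a).2 = 0 ∨ (endpt a).1 + (endpt a).2 = 1) →
    s = Step.N ∨ s = Step.S

/-- A deque-walk: a vertical-happy big-walk. -/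
def IsDequeWalk (w : List Step) : Prop := IsBigWalk w ∧ VerticalHappy w

/-- The walk stays in the quarter plane x, y ≥ 0. -/
def InQuarterPlane (w : List Step) : Prop :=
  ∀ p ∈ positions w, 0 ≤ p.1 ∧ 0 ≤ p.2

/-- A 2sip-walk: a quarter-plane walk from (0,0) to (0,0), standard and eager. -/
def Is2sipWalk (w : List Step) : Prop :=
  InQuarterPlane w ∧ endpt w = (0, 0) ∧ Standard w ∧ Eager w

/-- `bCount n` = number of big-walks of length 2n. -/
noncomputable def bCount (n : ℕ) : ℕ :=
  Nat.card {w : List Step // w.length = 2 * n ∧ IsBigWalk w}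

/-- `blCount n` = number of left-walks of length 2n. -/
noncomputable def blCount (n : ℕ) : ℕ :=
  Nat.card {w : List Step // w.length = 2 * n ∧ IsLeftWalk w}

/-- `brCount n` = number of right-walks of length 2n. -/
noncomputable def brCount (n : ℕ) : ℕ :=
  Nat.card {w : List Step // w.length = 2 * n ∧ IsRightWalk w}

/-- `dCount n` = number of deque-walks of length 2n. -/
noncomputable def dCount (n : ℕ) : ℕ :=
  Nat.card {w : List Step // w.length = 2 * n ∧ IsDequeWalk w}

/-- `pCount n` = number of 2sip-walks of length 2n. -/
noncomputable def pCount (n : ℕ) : ℕ :=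
  Nat.card {w : List Step // w.length = 2 * n ∧ Is2sipWalk w}

/-- Stage (1) of the construction: 2m+1 N steps, 2m E steps, one N step, two S steps. -/
def stage1 (m : ℕ) : List Step :=
  List.replicate (2 * m + 1) Step.N ++ List.replicate (2 * m) Step.E ++
    [Step.N, Step.S, Step.S]

/-- Stage (2): the concatenation of the m chosen walks. -/
def stage2 (m : ℕ) (ws : Fin m → List Step) : List Step := (List.ofFn ws).flatten

/-- Stage (3): S steps down to the x-axis then W steps back to the origin. -/
def stage3 (m : ℕ) (ws : Fin m → List Step) : List Step :=
  List.replicate (endpt (stage1 m ++ stage2 m ws)).2.toNat Step.S ++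
    List.replicate (endpt (stage1 m ++ stage2 m ws)).1.toNat Step.W

/-- The full constructed path. -/
def construct (m : ℕ) (ws : Fin m → List Step) : List Step :=
  stage1 m ++ stage2 m ws ++ stage3 m ws

/-- The tuple of m walks is valid for the construction: each has length 2m, and
is a left-walk if the current position (2m+x, 2m-x) has x > 0, and a right-walk
otherwise. -/
def ValidTuple (m : ℕ) (ws : Fin m → List Step) : Prop :=
  ∀ k : Fin m, (ws k).length = 2 * m ∧
    (if 2 * (m : ℤ) < (endpt (stage1 m ++ ((List.ofFn ws).take (k : ℕ)).flatten)).1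
      then IsLeftWalk (ws k) else IsRightWalk (ws k))

/-!
Stage 1 climbs to `(2m, 2m)`. From a point `(2m + x, 2m - x)` with `|x| ≤ m`, a half-plane walk
of length `2m` only visits points at most `m` below or to the left of its start, and the left/right
choice keeps its end of the same form; so the path stays in the quarter plane, and stage 3 brings
it back to the origin.

Eagerness can only fail at a junction of two pieces, but stage 1 and every big-walk end with an
`S` or `W` step. A QP-subloop must start with `N` or `E`, and one starting with `E` needs a `W`
step; as stage 1 has no `W` and stage 3 no `E`, such a loop lies in neither, and it cannot leave
stage 1 since the `E` steps of stage 1 are taken above its end point. If it starts inside a big-walk and leaves it, it must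
pass the end point of that walk, which lies on the lowest line `x + y = const` of the walk; so the
rest of the walk is itself a loop starting with `E`, against standardness.
-/

open List

@[simp] lemma zero_le_prod_iff {α β : Type*} [Zero α] [Zero β] [LE α] [LE β] {p : α × β} :
    0 ≤ p ↔ 0 ≤ p.1 ∧ 0 ≤ p.2 := Iff.rfl

@[simp] lemma endpt_nil : endpt [] = 0 := rfl

@[simp] lemma endpt_cons (s : Step) (w : List Step) : endpt (s :: w) = s.vec + endpt w := by
  simp [endpt]

@[simp] lemma endpt_append (u v : List Step) : endpt (u ++ v) = endpt u + endpt v := by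
  simp [endpt]

@[simp] lemma endpt_replicate (n : ℕ) (s : Step) : endpt (replicate n s) = (n : ℤ) • s.vec := by
  simp [endpt]

lemma endpt_fst (w : List Step) : (endpt w).1 = w.count .E - w.count .W := by
  induction w with
  | nil => rfl
  | cons s w ih => cases s <;> simp [Step.vec, ih] <;> ring

lemma abs_endpt_le (w : List Step) : |(endpt w).1| + |(endpt w).2| ≤ w.length := by
  induction w with
  | nil => simp
  | cons s w ih =>
    have hs : |s.vec.1| + |s.vec.2| = 1 := by cases s <;> simp [Step.vec]
    have h₁ := abs_add_le s.vec.1 (endpt w).1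
    have h₂ := abs_add_le s.vec.2 (endpt w).2
    simp only [endpt_cons, Prod.fst_add, Prod.snd_add, length_cons]
    push_cast
    linarith

lemma scanl_vec_eq_map_inits (p : ℤ × ℤ) (w : List Step) :
    w.scanl (fun q s => q + s.vec) p = w.inits.map (p + endpt ·) := by
  induction w generalizing p with
  | nil => simp
  | cons s w ih => simp [scanl_cons, ih, Function.comp_def, add_assoc]

lemma mem_positions_iff {q : ℤ × ℤ} {w : List Step} :
    q ∈ positions w ↔ ∃ t, t <+: w ∧ endpt t = q := by
  simp [positions, scanl_vec_eq_map_inits, mem_inits, Prod.mk_zero_zero]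

def InQuarterPlaneFrom (p : ℤ × ℤ) (w : List Step) : Prop :=
  ∀ t, t <+: w → 0 ≤ p + endpt t

lemma inQuarterPlane_iff {w : List Step} : InQuarterPlane w ↔ InQuarterPlaneFrom 0 w := by
  simp [InQuarterPlane, InQuarterPlaneFrom, mem_positions_iff]

lemma inQuarterPlaneFrom_append {p : ℤ × ℤ} {u v : List Step} :
    InQuarterPlaneFrom p (u ++ v) ↔
      InQuarterPlaneFrom p u ∧ InQuarterPlaneFrom (p + endpt u) v := by
  refine ⟨fun h => ⟨fun t ht => h t (ht.trans (prefix_append u v)), fun t ht => ?_⟩, ?_⟩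
  · simpa [add_assoc] using h (u ++ t) ((prefix_append_right_inj u).2 ht)
  · rintro ⟨hu, hv⟩ t ht
    rcases prefix_or_prefix_of_prefix ht (prefix_append u v) with ht' | ⟨t', rfl⟩
    · exact hu t ht'
    · simpa [add_assoc] using hv t' ((prefix_append_right_inj u).1 ht)

@[simp] lemma inQuarterPlaneFrom_nil {p : ℤ × ℤ} : InQuarterPlaneFrom p [] ↔ 0 ≤ p := by
  simp [InQuarterPlaneFrom]

@[simp] lemma inQuarterPlaneFrom_cons {p : ℤ × ℤ} {s : Step} {w : List Step} :
    InQuarterPlaneFrom p (s :: w) ↔ 0 ≤ p ∧ InQuarterPlaneFrom (p + s.vec) w := by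
  refine ⟨fun h => ⟨by simpa using h [] nil_prefix, fun t ht => ?_⟩, ?_⟩
  · simpa [add_assoc] using h (s :: t) (cons_prefix_cons.2 ⟨rfl, ht⟩)
  · rintro ⟨h₀, h⟩ t ht
    rcases prefix_cons_iff.1 ht with rfl | ⟨t', rfl, ht'⟩
    · simpa using h₀
    · simpa [add_assoc] using h t' ht'

lemma inQuarterPlaneFrom_replicate {p : ℤ × ℤ} {n : ℕ} {s : Step} :
    InQuarterPlaneFrom p (replicate n s) ↔ ∀ i ≤ n, 0 ≤ p + (i : ℤ) • s.vec := by
  refine ⟨fun h i hi => ?_, fun h t ht => ?_⟩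
  · simpa using h (replicate i s) (prefix_replicate_iff.2 (by simp [hi]))
  · obtain ⟨hlen, ht⟩ := prefix_replicate_iff.1 ht
    rw [ht]
    simpa using h _ hlen

lemma InHalfPlane.neg_le_endpt {w t : List Step} {n : ℕ} (hw : InHalfPlane w)
    (hlen : w.length ≤ 2 * n) (ht : t <+: w) :
    -(n : ℤ) ≤ (endpt t).1 ∧ -(n : ℤ) ≤ (endpt t).2 := by
  have hsum : 0 ≤ (endpt t).1 + (endpt t).2 := hw _ (mem_positions_iff.2 ⟨t, ht, rfl⟩)
  have habs := abs_endpt_le t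
  have htlen : (t.length : ℤ) ≤ 2 * n := by exact_mod_cast ht.length_le.trans hlen
  constructor <;> linarith [le_abs_self (endpt t).1, le_abs_self (endpt t).2,
    neg_abs_le (endpt t).1, neg_abs_le (endpt t).2]

lemma InHalfPlane.getLast?_eq_S_or_W {w : List Step} (hw : InHalfPlane w)
    (hend : (endpt w).1 + (endpt w).2 = 0) : ∀ s ∈ w.getLast?, s = .S ∨ s = .W := by
  intro s hs
  obtain ⟨t, rfl⟩ := getLast?_eq_some_iff.1 hs
  have ht : 0 ≤ (endpt t).1 + (endpt t).2 := hw _ (mem_positions_iff.2 ⟨t, prefix_append _ _, rfl⟩)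
  cases s <;> simp_all [Step.vec] <;> omega

lemma isQPLoop_iff {l : List Step} :
    IsQPLoop l ↔ l ≠ [] ∧ endpt l = 0 ∧ InQuarterPlaneFrom 0 l := by
  rw [IsQPLoop, ← inQuarterPlane_iff, Prod.mk_zero_zero]
  rfl

lemma IsQPLoop.head?_eq_N_or_E {l : List Step} (hl : IsQPLoop l) :
    l.head? = some .N ∨ l.head? = some .E := by
  obtain ⟨hne, -, hqp⟩ := isQPLoop_iff.1 hl
  obtain ⟨s, l, rfl⟩ := exists_cons_of_ne_nil hne
  have := (inQuarterPlaneFrom_cons.1 hqp).2 [] nil_prefix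
  cases s <;> simp_all [Step.vec]

lemma IsQPLoop.W_mem_of_head?_eq_E {l : List Step} (hl : IsQPLoop l)
    (hE : l.head? = some .E) : Step.W ∈ l := by
  obtain ⟨l, rfl⟩ := head?_eq_some_iff.1 hE
  have h := endpt_fst (.E :: l)
  rw [hl.2.1, count_cons_self] at h
  rw [← count_pos_iff]
  push_cast at h
  omega

lemma IsQPLoop.of_prefix {l s : List Step} (hl : IsQPLoop l) (hs : s <+: l) (hne : s ≠ [])
    (h₀ : endpt s = 0) : IsQPLoop s := by
  obtain ⟨-, -, hqp⟩ := isQPLoop_iff.1 hl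
  exact isQPLoop_iff.2 ⟨hne, h₀, fun t ht => hqp t (ht.trans hs)⟩

lemma standard_of_W_not_mem {w : List Step} (hW : Step.W ∉ w) : Standard w := by
  rintro a l b rfl hl
  exact hl.head?_eq_N_or_E.resolve_right fun hE => hW (by simp [hl.W_mem_of_head?_eq_E hE])

lemma standard_of_E_not_mem {w : List Step} (hE : Step.E ∉ w) : Standard w := by
  rintro a l b rfl hl
  exact hl.head?_eq_N_or_E.resolve_right fun hE' => hE (by simp [mem_of_mem_head? hE'])

/-- A subloop straddling the junction starts with a nonempty suffix `s` of `u`; the hypothesis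
forces `s` itself to be a loop, which `Standard u` controls. -/
lemma Standard.append {u v : List Step} (hu : Standard u) (hv : Standard v)
    (hsuff : ∀ s, s <:+ u → s.head? = some .E → 0 ≤ endpt s → endpt s = 0) :
    Standard (u ++ v) := by
  intro a l b h hl
  by_contra hN
  have hE := hl.head?_eq_N_or_E.resolve_left hN
  rcases append_eq_append_iff.1 h with ⟨c, hc, rfl⟩ | ⟨c, rfl, -⟩
  · rcases append_eq_append_iff.1 hc with ⟨s, rfl, rfl⟩ | ⟨d, rfl, rfl⟩
    · obtain rfl | hs := eq_or_ne s []
      · exact hN (hv [] _ b (by simp) hl)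
      · have hsE : s.head? = some .E := by rwa [head?_append_of_ne_nil _ hs] at hE
        have hs₀ : 0 ≤ endpt s := by
          simpa using (isQPLoop_iff.1 hl).2.2 s (prefix_append s c)
        have hsl := hl.of_prefix (prefix_append s c) hs (hsuff s (suffix_append a s) hsE hs₀)
        simp [hu a s [] (by simp) hsl] at hsE
    · exact hN (hv d l b (by simp) hl)
  · exact hN (hu a l c (by simp) hl)

lemma InHalfPlane.endpt_suffix_eq_zero {w s : List Step} (hw : InHalfPlane w)
    (hend : (endpt w).1 + (endpt w).2 = 0) (hs : s <:+ w) (h₀ : 0 ≤ endpt s) :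
    endpt s = 0 := by
  obtain ⟨a, rfl⟩ := hs
  have ha : 0 ≤ (endpt a).1 + (endpt a).2 := hw _ (mem_positions_iff.2 ⟨a, prefix_append _ _, rfl⟩)
  simp only [endpt_append, Prod.fst_add, Prod.snd_add] at hend
  rw [zero_le_prod_iff] at h₀
  ext <;> simp <;> omega

lemma standard_flatten_append {L : List (List Step)} {v : List Step}
    (hL : ∀ w ∈ L, IsBigWalk w) (hv : Standard v) : Standard (L.flatten ++ v) := by
  induction L with
  | nil => simpa using hv
  | cons w L ih =>
    obtain ⟨hhalf, hend, hstd, -⟩ := hL w mem_cons_self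
    rw [flatten_cons, append_assoc]
    exact hstd.append (ih fun w' hw' => hL w' (mem_cons_of_mem w hw'))
      fun s hs _ => hhalf.endpt_suffix_eq_zero hend hs

lemma suffix_append_cases {α : Type*} {s u v : List α} (h : s <:+ u ++ v) :
    s <:+ v ∨ ∃ s', s' <:+ u ∧ s = s' ++ v := by
  rcases suffix_or_suffix_of_suffix h (suffix_append u v) with h' | ⟨s', rfl⟩
  · exact .inl h'
  · exact .inr ⟨s', suffix_append_self_iff.1 h, rfl⟩

lemma endpt_snd_of_suffix_stage1 {m : ℕ} {s : List Step} (hs : s <:+ stage1 m)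
    (hE : s.head? = some .E) : (endpt s).2 = -1 := by
  rw [stage1, append_assoc] at hs
  rcases suffix_append_cases hs with hs | ⟨s', hs', rfl⟩
  · rcases suffix_append_cases hs with hs | ⟨s', hs', rfl⟩
    · simp [suffix_cons_iff] at hs
      rcases hs with rfl | rfl | rfl | rfl <;> simp at hE
    · rw [(suffix_replicate_iff.1 hs').2]
      simp [Step.vec]
  · rw [(suffix_replicate_iff.1 hs').2] at hE ⊢
    obtain h | h := Nat.eq_zero_or_pos s'.length
    · simp [h, Step.vec]
    · simp [head?_append, head?_replicate, h.ne'] at hE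

lemma standard_stage1_append {m : ℕ} {v : List Step} (hv : Standard v) :
    Standard (stage1 m ++ v) := by
  refine (standard_of_W_not_mem ?_).append hv fun s hs hE h₀ => ?_
  · simp [stage1, mem_replicate]
  · have := endpt_snd_of_suffix_stage1 hs hE
    rw [zero_le_prod_iff] at h₀
    omega

def NoCorner (a b : Step) : Prop := ¬(a = .E ∧ b = .S) ∧ ¬(a = .N ∧ b = .W)

lemma eager_iff_isChain {w : List Step} : Eager w ↔ IsChain NoCorner w := by
  rw [isChain_iff_forall_rel_of_append_cons_cons]
  constructor
  · rintro ⟨hES, hNW⟩ a b l₁ l₂ rfl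
    refine ⟨?_, ?_⟩ <;> rintro ⟨rfl, rfl⟩
    exacts [hES ⟨l₁, l₂, by simp⟩, hNW ⟨l₁, l₂, by simp⟩]
  · intro h
    refine ⟨?_, ?_⟩ <;> rintro ⟨l₁, l₂, rfl⟩
    exacts [(h (l₁ := l₁) (l₂ := l₂) (by simp)).1 ⟨rfl, rfl⟩,
      (h (l₁ := l₁) (l₂ := l₂) (by simp)).2 ⟨rfl, rfl⟩]

lemma Eager.append {u v : List Step} (hu : Eager u) (hv : Eager v)
    (hlast : ∀ s ∈ u.getLast?, s = .S ∨ s = .W) : Eager (u ++ v) := by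
  rw [eager_iff_isChain] at *
  refine isChain_append.2 ⟨hu, hv, fun a ha b _ => ?_⟩
  rcases hlast a ha with rfl | rfl <;> simp [NoCorner]

lemma eager_replicate (n : ℕ) (s : Step) : Eager (replicate n s) :=
  eager_iff_isChain.2 (isChain_replicate_of_rel n (by cases s <;> simp [NoCorner]))

lemma eager_flatten_append {L : List (List Step)} {v : List Step}
    (hL : ∀ w ∈ L, IsBigWalk w) (hv : Eager v) : Eager (L.flatten ++ v) := by
  induction L with
  | nil => simpa using hv
  | cons w L ih =>
    obtain ⟨hhalf, hend, -, heager⟩ := hL w mem_cons_self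
    rw [flatten_cons, append_assoc]
    exact heager.append (ih fun w' hw' => hL w' (mem_cons_of_mem w hw'))
      (hhalf.getLast?_eq_S_or_W hend)

lemma eager_stage1_append {m : ℕ} {v : List Step} (hv : Eager v) : Eager (stage1 m ++ v) := by
  refine Eager.append ?_ hv (by simp [stage1])
  rw [eager_iff_isChain, stage1, isChain_append, isChain_append]
  refine ⟨⟨isChain_replicate_of_rel _ (by simp [NoCorner]),
    isChain_replicate_of_rel _ (by simp [NoCorner]), ?_⟩, by simp [NoCorner], ?_⟩ <;>
    simp [getLast?_append, getLast?_replicate, head?_replicate, NoCorner]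

def southWestWalk (p : ℤ × ℤ) : List Step :=
  replicate p.2.toNat .S ++ replicate p.1.toNat .W

lemma stage3_eq (m : ℕ) (ws : Fin m → List Step) :
    stage3 m ws = southWestWalk (endpt (stage1 m ++ stage2 m ws)) := rfl

lemma endpt_southWestWalk {p : ℤ × ℤ} (hp : 0 ≤ p) : endpt (southWestWalk p) = -p := by
  rw [zero_le_prod_iff] at hp
  ext <;> simp [southWestWalk, Step.vec] <;> omega

lemma inQuarterPlaneFrom_southWestWalk {p : ℤ × ℤ} (hp : 0 ≤ p) :
    InQuarterPlaneFrom p (southWestWalk p) := by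
  rw [zero_le_prod_iff] at hp
  simp only [southWestWalk, inQuarterPlaneFrom_append, inQuarterPlaneFrom_replicate]
  constructor <;> intro i hi <;> simp [Step.vec] <;> omega

lemma eager_southWestWalk (p : ℤ × ℤ) : Eager (southWestWalk p) :=
  (eager_replicate _ _).append (eager_replicate _ _) (by simp [getLast?_replicate])

lemma standard_southWestWalk (p : ℤ × ℤ) : Standard (southWestWalk p) :=
  standard_of_E_not_mem (by simp [southWestWalk, mem_replicate])

def partialConstruct (m : ℕ) (ws : Fin m → List Step) (k : ℕ) : List Step :=
  stage1 m ++ ((List.ofFn ws).take k).flatten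

lemma inQuarterPlaneFrom_stage1 (m : ℕ) : InQuarterPlaneFrom 0 (stage1 m) := by
  simp only [stage1, inQuarterPlaneFrom_append, inQuarterPlaneFrom_replicate,
    inQuarterPlaneFrom_cons, inQuarterPlaneFrom_nil]
  simp [Step.vec]
  and_intros <;> intros <;> omega

lemma partialConstruct_succ (m : ℕ) (ws : Fin m → List Step) {k : ℕ} (hk : k < m) :
    partialConstruct m ws (k + 1) = partialConstruct m ws k ++ ws ⟨k, hk⟩ := by
  simp [partialConstruct, take_add_one, hk]

lemma partialConstruct_self (m : ℕ) (ws : Fin m → List Step) :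
    partialConstruct m ws m = stage1 m ++ stage2 m ws := by
  rw [partialConstruct, stage2, take_of_length_le (by simp)]

lemma ValidTuple.isBigWalk {m : ℕ} {ws : Fin m → List Step} (hws : ValidTuple m ws)
    (k : Fin m) : IsBigWalk (ws k) := by
  have h := (hws k).2
  split_ifs at h <;> exact h.1

lemma ValidTuple.endpt_partialConstruct {m : ℕ} {ws : Fin m → List Step}
    (hws : ValidTuple m ws) {k : ℕ} (hk : k ≤ m) :
    ∃ x : ℤ, |x| ≤ m ∧ endpt (partialConstruct m ws k) = (2 * m + x, 2 * m - x) := by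
  induction k with
  | zero => exact ⟨0, by simp, by simp [partialConstruct, stage1, Step.vec]⟩
  | succ k ih =>
    obtain ⟨x, hx, hpos⟩ := ih (by omega)
    have hbig := hws.isBigWalk ⟨k, hk⟩
    have hsum := hbig.2.1
    have hd := hbig.1.neg_le_endpt (hws ⟨k, hk⟩).1.le (prefix_refl _)
    have hchoice : if 2 * (m : ℤ) < (endpt (partialConstruct m ws k)).1
        then IsLeftWalk (ws ⟨k, hk⟩) else IsRightWalk (ws ⟨k, hk⟩) := (hws ⟨k, hk⟩).2
    rw [hpos] at hchoice
    refine ⟨x + (endpt (ws ⟨k, hk⟩)).1, ?_, ?_⟩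
    · rw [abs_le] at hx ⊢
      split_ifs at hchoice with hc <;> have := hchoice.2 <;> constructor <;> omega
    · rw [partialConstruct_succ m ws hk, endpt_append, hpos]
      ext <;> simp <;> omega

lemma ValidTuple.inQuarterPlaneFrom_partialConstruct {m : ℕ} {ws : Fin m → List Step}
    (hws : ValidTuple m ws) {k : ℕ} (hk : k ≤ m) :
    InQuarterPlaneFrom 0 (partialConstruct m ws k) := by
  induction k with
  | zero => simpa [partialConstruct] using inQuarterPlaneFrom_stage1 m
  | succ k ih =>
    obtain ⟨x, hx, hpos⟩ := hws.endpt_partialConstruct (k := k) (by omega)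
    rw [partialConstruct_succ m ws hk, inQuarterPlaneFrom_append]
    refine ⟨ih (by omega), fun t ht => ?_⟩
    have hd := (hws.isBigWalk ⟨k, hk⟩).1.neg_le_endpt (hws ⟨k, hk⟩).1.le ht
    rw [abs_le] at hx
    simp [hpos]
    omega

lemma length_stage1 (m : ℕ) : (stage1 m).length = 4 * m + 4 := by
  simp [stage1]
  ring

lemma length_stage2 {m n : ℕ} {ws : Fin m → List Step} (h : ∀ k, (ws k).length = n) :
    (stage2 m ws).length = m * n := by
  simp [stage2, map_ofFn, Function.comp_def, h]

theorem construct_is_2sipWalk_general (m : ℕ) (ws : Fin m → List Step)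
    (hws : ValidTuple m ws) :
    Is2sipWalk (construct m ws) ∧ (construct m ws).length = 2 * m ^ 2 + 8 * m + 4 := by
  have hbig : ∀ w ∈ List.ofFn ws, IsBigWalk w := by
    simpa [mem_ofFn] using hws.isBigWalk
  obtain ⟨x, hx, hP⟩ := hws.endpt_partialConstruct le_rfl
  rw [partialConstruct_self] at hP
  rw [abs_le] at hx
  have hP₀ : 0 ≤ endpt (stage1 m ++ stage2 m ws) := by
    simp [hP]
    omega
  have hconstruct : construct m ws = stage1 m ++ (stage2 m ws ++ stage3 m ws) := append_assoc ..
  refine ⟨⟨?_, ?_, ?_, ?_⟩, ?_⟩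
  · rw [inQuarterPlane_iff, construct, stage3_eq, inQuarterPlaneFrom_append, zero_add]
    refine ⟨?_, inQuarterPlaneFrom_southWestWalk hP₀⟩
    rw [← partialConstruct_self]
    exact hws.inQuarterPlaneFrom_partialConstruct le_rfl
  · rw [construct, stage3_eq, endpt_append, endpt_southWestWalk hP₀, add_neg_cancel]
    rfl
  · rw [hconstruct, stage3_eq]
    exact standard_stage1_append (standard_flatten_append hbig (standard_southWestWalk _))
  · rw [hconstruct, stage3_eq]
    exact eager_stage1_append (eager_flatten_append hbig (eager_southWestWalk _))
  · have h₃ : (stage3 m ws).length = 4 * m := by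
      rw [stage3_eq, hP]
      simp [southWestWalk]
      omega
    rw [construct, length_append, length_append, length_stage1,
      length_stage2 (fun k => (hws k).1), h₃]
    ring

/-- The constructed path is a 2sip-walk of length 2m² + 8m + 4. -/
theorem construct_is_2sipWalk (m : ℕ) (hm : 1 ≤ m) (ws : Fin m → List Step)
    (hws : ValidTuple m ws) :
    Is2sipWalk (construct m ws) ∧ (construct m ws).length = 2 * m ^ 2 + 8 * m + 4 :=
  construct_is_2sipWalk_general m ws hws
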